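/- arXiv:1212.1585 — 3 statements merged into one kernel-verified Lean document; each statement's English description precedes it below -/
import Mathlib

section
/- Let G be a group acting on a set X and let M ⊆ X be a subset that is commensurated by the G-action (i.e., for every g ∈ G the symmetric difference M △ gM is finite). Then the map tr_M : G → ℤ defined by tr_M(g) = #(M \ g⁻¹M) − #(g⁻¹M \ M) is a group homomorphism. -/
/-!
For commensurate `A, B` put `[A : B] = #(A \ B) − #(B \ A)` (`Set.relIndex`). Inside any finite
set `F` containing `A ∆ B` this is `#(A ∩ F) − #(B ∩ F)`, so the index is additive,
`[A : C] = [A : B] + [B : C]`, and it is invariant under translating both sets. Hence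
`tr_M(gh) = [M : h⁻¹M] + [h⁻¹M : h⁻¹g⁻¹M] = tr_M(h) + tr_M(g)`.
-/

open Pointwise symmDiff

namespace Set

variable {X : Type*}

noncomputable def relIndex (A B : Set X) : ℤ := (A \ B).ncard - (B \ A).ncard

theorem ncard_sdiff_sub_ncard_sdiff {s t : Set X} (hs : s.Finite) (ht : t.Finite) :
    ((s \ t).ncard : ℤ) - (t \ s).ncard = s.ncard - t.ncard := by
  have hs' := ncard_inter_add_ncard_sdiff_eq_ncard s t hs
  have ht' := ncard_inter_add_ncard_sdiff_eq_ncard t s ht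
  rw [inter_comm] at ht'
  omega

theorem sdiff_eq_inter_sdiff_inter_of_symmDiff_subset {A B F : Set X} (h : A ∆ B ⊆ F) :
    A \ B = (A ∩ F) \ (B ∩ F) := by
  ext x
  have hF : x ∈ A \ B → x ∈ F := fun hx => h (Or.inl hx)
  simp only [mem_sdiff, mem_inter_iff] at hF ⊢
  tauto

theorem relIndex_eq_of_symmDiff_subset {A B F : Set X} (hF : F.Finite) (h : A ∆ B ⊆ F) :
    relIndex A B = (A ∩ F).ncard - (B ∩ F).ncard := by
  rw [relIndex, sdiff_eq_inter_sdiff_inter_of_symmDiff_subset h,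
    sdiff_eq_inter_sdiff_inter_of_symmDiff_subset ((symmDiff_comm B A).subset.trans h),
    ncard_sdiff_sub_ncard_sdiff (hF.inter_of_right A) (hF.inter_of_right B)]

theorem relIndex_add_relIndex {A B C : Set X} (hAB : (A ∆ B).Finite) (hBC : (B ∆ C).Finite) :
    relIndex A B + relIndex B C = relIndex A C := by
  have hF := hAB.union hBC
  rw [relIndex_eq_of_symmDiff_subset hF subset_union_left,
    relIndex_eq_of_symmDiff_subset hF subset_union_right,
    relIndex_eq_of_symmDiff_subset hF (symmDiff_triangle A B C)]
  ring

theorem relIndex_smul_smul {G : Type*} [Group G] [MulAction G X] (g : G) (A B : Set X) :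
    relIndex (g • A) (g • B) = relIndex A B := by
  simp only [relIndex, ← smul_set_sdiff, ncard_smul_set]

end Set

open Set in
/-- If a group `G` acting on a set `X` commensurates a subset `M ⊆ X`
(the symmetric difference `M △ gM` is finite for all `g`), then the transfer map
`tr_M(g) = #(M \ g⁻¹M) − #(g⁻¹M \ M)` is a group homomorphism `G → ℤ`. -/
theorem transfer_char_isHom {G X : Type*} [Group G] [MulAction G X] (M : Set X)
    (hM : ∀ g : G, (symmDiff M (g • M)).Finite) :
    ∀ g h : G,
      (((M \ ((g * h)⁻¹ • M)).ncard : ℤ) - ((((g * h)⁻¹ • M) \ M).ncard : ℤ)) =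
        (((M \ (g⁻¹ • M)).ncard : ℤ) - (((g⁻¹ • M) \ M).ncard : ℤ)) +
        (((M \ (h⁻¹ • M)).ncard : ℤ) - (((h⁻¹ • M) \ M).ncard : ℤ)) := by
  intro g h
  have hTranslate : ((h⁻¹ • M) ∆ (h⁻¹ • g⁻¹ • M)).Finite := by
    rw [← smul_set_symmDiff]
    exact (hM g⁻¹).smul_set
  have hCocycle := relIndex_add_relIndex (hM h⁻¹) hTranslate
  rw [relIndex_smul_smul] at hCocycle
  change relIndex M ((g * h)⁻¹ • M) = relIndex M (g⁻¹ • M) + relIndex M (h⁻¹ • M)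
  rw [mul_inv_rev, mul_smul, ← hCocycle, add_comm]
end

section
/- Let G be a group acting on a set X, and let M, N ⊆ X be commensurated subsets that are commensurate to each other. Then the transfer characters agree: tr_M(g) = tr_N(g) for all g ∈ G. -/
/-!
The transfer character is `g ↦ relIndex M (g⁻¹ • M)` with `relIndex A B = #(A \ B) - #(B \ A)`.
Inside any finite `F` containing `A ∆ B`, `relIndex A B = #(A ∩ F) - #(B ∩ F)`, so the relative
index telescopes: `relIndex A B + relIndex B C = relIndex A C`; it is also invariant under
translation. Going from `M` to `g⁻¹ • N` through `N` or through `g⁻¹ • M` then gives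
`relIndex M N + tr_N(g) = tr_M(g) + relIndex M N`.
-/

open Pointwise

noncomputable def relIndex {X : Type*} (A B : Set X) : ℤ :=
  (A \ B).ncard - (B \ A).ncard

lemma relIndex_eq_ncard_inter_sub {X : Type*} {A B F : Set X} (hF : F.Finite)
    (hABF : symmDiff A B ⊆ F) :
    relIndex A B = ((A ∩ F).ncard : ℤ) - (B ∩ F).ncard := by
  have hA : (A ∩ F) \ B = A \ B := by
    rw [Set.inter_sdiff_right_comm, Set.inter_eq_left.mpr (le_trans le_sup_left hABF)]
  have hB : (B ∩ F) \ A = B \ A := by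
    rw [Set.inter_sdiff_right_comm, Set.inter_eq_left.mpr (le_trans le_sup_right hABF)]
  have hAB : A ∩ F ∩ B = B ∩ F ∩ A := by
    rw [Set.inter_right_comm, Set.inter_comm A B, Set.inter_right_comm]
  have cardA := Set.ncard_inter_add_ncard_sdiff_eq_ncard (A ∩ F) B (hF.inter_of_right A)
  have cardB := Set.ncard_inter_add_ncard_sdiff_eq_ncard (B ∩ F) A (hF.inter_of_right B)
  rw [hA, hAB] at cardA
  rw [hB] at cardB
  unfold relIndex
  omega

lemma relIndex_add_relIndex {X : Type*} {A B C : Set X}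
    (hAB : (symmDiff A B).Finite) (hBC : (symmDiff B C).Finite) :
    relIndex A B + relIndex B C = relIndex A C := by
  have hF := hAB.union hBC
  rw [relIndex_eq_ncard_inter_sub hF Set.subset_union_left,
    relIndex_eq_ncard_inter_sub hF Set.subset_union_right,
    relIndex_eq_ncard_inter_sub hF (symmDiff_triangle A B C)]
  ring

lemma relIndex_smul {G X : Type*} [Group G] [MulAction G X] (g : G) (A B : Set X) :
    relIndex (g • A) (g • B) = relIndex A B := by
  simp only [relIndex, ← Set.smul_set_sdiff, Set.ncard_smul_set]

/-- If `M` and `N` are commensurated subsets for a `G`-action on `X` that are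
commensurate to each other, then their transfer characters agree:
`tr_M(g) = tr_N(g)` for all `g ∈ G`. -/
theorem transfer_char_commensurate_eq {G X : Type*} [Group G] [MulAction G X]
    (M N : Set X)
    (hM : ∀ g : G, (symmDiff M (g • M)).Finite)
    (hN : ∀ g : G, (symmDiff N (g • N)).Finite)
    (hMN : (symmDiff M N).Finite) :
    ∀ g : G,
      (((M \ (g⁻¹ • M)).ncard : ℤ) - (((g⁻¹ • M) \ M).ncard : ℤ)) =
        (((N \ (g⁻¹ • N)).ncard : ℤ) - (((g⁻¹ • N) \ N).ncard : ℤ)) := by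
  intro g
  have hgMN : (symmDiff (g⁻¹ • M) (g⁻¹ • N)).Finite := by
    rw [← Set.smul_set_symmDiff]
    exact hMN.image _
  have viaN := relIndex_add_relIndex hMN (hN g⁻¹)
  have viaGM := relIndex_add_relIndex (hM g⁻¹) hgMN
  rw [relIndex_smul] at viaGM
  change relIndex M (g⁻¹ • M) = relIndex N (g⁻¹ • N)
  linarith
end

section
/- Let Γ be a group acting on a measure space (M, θ) such that the diagonal Γ-action on (M × M, θ × θ) is ergodic. Then every finite index subgroup Γ₀ ≤ Γ acts ergodically on (M, θ). -/
/-!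
If `A` is invariant under a finite index subgroup, its `Γ`-orbit in `Set M` is a finite family of
measurable sets. The pairs `(x, y)` separated by some member of this family form a
diagonally invariant set. It contains `A ×ˢ Aᶜ`, so it is not null unless `A` is null or conull.
Its complement contains `F ×ˢ F` for some non-null atom `F` of the finite partition generated
by the family, so it is not conull either.
-/

open MeasureTheory MulAction
open scoped Pointwise

section SeparatedPairs

variable {α : Type*}

def separatedPairs (𝒮 : Set (Set α)) : Set (α × α) := ⋃ B ∈ 𝒮, B ×ˢ Bᶜ

theorem prod_compl_subset_separatedPairs {𝒮 : Set (Set α)} {A : Set α} (hA : A ∈ 𝒮) :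
    A ×ˢ Aᶜ ⊆ separatedPairs 𝒮 :=
  Set.subset_biUnion_of_mem (u := fun B => B ×ˢ Bᶜ) hA

theorem mk_notMem_separatedPairs {𝒮 : Set (Set α)} {x y : α} (h : ∀ B ∈ 𝒮, x ∈ B ↔ y ∈ B) :
    (x, y) ∉ separatedPairs 𝒮 := by
  simp only [separatedPairs, Set.mem_iUnion, Set.mem_prod, Set.mem_compl_iff, not_exists]
  exact fun B hB ⟨hx, hy⟩ => hy ((h B hB).1 hx)

theorem preimage_smul_separatedPairs {G : Type*} [Group G] [MulAction G α] (g : G)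
    (𝒮 : Set (Set α)) :
    (fun p : α × α => g • p) ⁻¹' separatedPairs 𝒮 = separatedPairs (g⁻¹ • 𝒮) := by
  ext ⟨x, y⟩
  simp only [separatedPairs, Set.mem_preimage, Set.mem_iUnion, Set.mem_prod, Set.mem_compl_iff,
    Prod.smul_mk, exists_prop]
  constructor
  · rintro ⟨B, hB, hx, hy⟩
    exact ⟨g⁻¹ • B, Set.smul_mem_smul_set hB, Set.mem_inv_smul_set_iff.2 hx,
      mt Set.mem_inv_smul_set_iff.1 hy⟩
  · rintro ⟨B, hB, hx, hy⟩
    exact ⟨g • B, Set.mem_inv_smul_set_iff.1 hB, Set.smul_mem_smul_set hx,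
      mt Set.smul_mem_smul_set_iff.1 hy⟩

variable [MeasurableSpace α]

theorem measurableSet_separatedPairs {𝒮 : Set (Set α)} (h𝒮 : 𝒮.Countable)
    (hm : ∀ B ∈ 𝒮, MeasurableSet B) : MeasurableSet (separatedPairs 𝒮) :=
  .biUnion h𝒮 fun B hB => (hm B hB).prod (hm B hB).compl

theorem MeasureTheory.exists_measure_preimage_singleton_ne_zero {β : Type*} [Countable β]
    (μ : Measure α) [NeZero μ] (f : α → β) : ∃ b, μ (f ⁻¹' {b}) ≠ 0 := by
  have : μ (⋃ b, f ⁻¹' {b}) ≠ 0 := by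
    simpa [← Set.preimage_iUnion, Set.iUnion_of_singleton] using NeZero.ne μ
  obtain ⟨b, hb⟩ := exists_measure_pos_of_not_measure_iUnion_null this
  exact ⟨b, hb.ne'⟩

theorem measure_prod_compl_separatedPairs_ne_zero (μ : Measure α) [SFinite μ] [NeZero μ]
    {𝒮 : Set (Set α)} (h𝒮 : 𝒮.Finite) : μ.prod μ (separatedPairs 𝒮)ᶜ ≠ 0 := by
  have := h𝒮.to_subtype
  obtain ⟨c, hc⟩ := exists_measure_preimage_singleton_ne_zero μ
    fun x => {B : 𝒮 | x ∈ (B : Set α)}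
  set F := (fun x => {B : 𝒮 | x ∈ (B : Set α)}) ⁻¹' {c}
  have hF : F ×ˢ F ⊆ (separatedPairs 𝒮)ᶜ := by
    rintro ⟨x, y⟩ ⟨hx, hy⟩
    refine mk_notMem_separatedPairs fun B hB => ?_
    exact Set.ext_iff.1 (hx.trans hy.symm) ⟨B, hB⟩
  refine fun h0 => mul_self_ne_zero.2 hc ?_
  rw [← Measure.prod_prod]
  exact measure_mono_null hF h0

end SeparatedPairs

theorem MulAction.finite_orbit_of_le_stabilizer {G α : Type*} [Group G] [MulAction G α]
    {H : Subgroup G} [H.FiniteIndex] {a : α} (h : H ≤ stabilizer G a) : (orbit G a).Finite := by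
  have := Subgroup.finiteIndex_of_le h
  exact (orbitEquivQuotientStabilizer G a).finite_iff.2 inferInstance

theorem finite_index_ergodic_of_doubly_ergodic_general {Γ M : Type*} [Group Γ]
    [MulAction Γ M] [MeasurableSpace M]
    (θ : Measure M) [IsProbabilityMeasure θ]
    (hmeas : ∀ γ : Γ, Measurable (fun x : M => γ • x))
    (herg2 : ∀ A : Set (M × M), MeasurableSet A →
      (∀ γ : Γ, (fun p : M × M => (γ • p.1, γ • p.2)) ⁻¹' A = A) →
      (θ.prod θ) A = 0 ∨ (θ.prod θ) Aᶜ = 0)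
    (Γ₀ : Subgroup Γ) [Γ₀.FiniteIndex] :
    ∀ A : Set M, MeasurableSet A →
      (∀ γ ∈ Γ₀, (fun x : M => γ • x) ⁻¹' A = A) →
      θ A = 0 ∨ θ Aᶜ = 0 := by
  intro A hA hinv
  have hstab : Γ₀ ≤ stabilizer Γ A := fun γ hγ => by
    simpa [Set.preimage_smul] using hinv γ⁻¹ (inv_mem hγ)
  have hfin : (orbit Γ A).Finite := finite_orbit_of_le_stabilizer hstab
  have hmeas_orbit : ∀ B ∈ orbit Γ A, MeasurableSet B := by
    rintro _ ⟨γ, rfl⟩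
    simpa [Set.preimage_smul] using hmeas γ⁻¹ hA
  have hinv_pairs : ∀ γ : Γ, (fun p : M × M => (γ • p.1, γ • p.2)) ⁻¹'
      separatedPairs (orbit Γ A) = separatedPairs (orbit Γ A) := fun γ =>
    (preimage_smul_separatedPairs γ _).trans (congrArg _ (smul_orbit γ⁻¹ A))
  rcases herg2 _ (measurableSet_separatedPairs hfin.countable hmeas_orbit) hinv_pairs with h | h
  · rw [← mul_eq_zero, ← Measure.prod_prod]
    exact measure_mono_null (prod_compl_subset_separatedPairs (mem_orbit_self A)) h
  · exact absurd h (measure_prod_compl_separatedPairs_ne_zero θ hfin)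

/-- If a group `Γ` acts on a probability space `(M, θ)` by measurable,
measure-class-preserving maps, and the diagonal action on `(M × M, θ × θ)` is
ergodic, then every finite index subgroup `Γ₀ ≤ Γ` acts ergodically on
`(M, θ)`. -/
theorem finite_index_ergodic_of_doubly_ergodic {Γ M : Type*} [Group Γ]
    [MulAction Γ M] [MeasurableSpace M]
    (θ : Measure M) [IsProbabilityMeasure θ]
    (hmeas : ∀ γ : Γ, Measurable (fun x : M => γ • x))
    (hqi : ∀ (γ : Γ) (A : Set M), MeasurableSet A →
      (θ A = 0 ↔ θ ((fun x : M => γ • x) ⁻¹' A) = 0))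
    (herg2 : ∀ A : Set (M × M), MeasurableSet A →
      (∀ γ : Γ, (fun p : M × M => (γ • p.1, γ • p.2)) ⁻¹' A = A) →
      (θ.prod θ) A = 0 ∨ (θ.prod θ) Aᶜ = 0)
    (Γ₀ : Subgroup Γ) [Γ₀.FiniteIndex] :
    ∀ A : Set M, MeasurableSet A →
      (∀ γ ∈ Γ₀, (fun x : M => γ • x) ⁻¹' A = A) →
      θ A = 0 ∨ θ Aᶜ = 0 :=
  finite_index_ergodic_of_doubly_ergodic_general θ hmeas herg2 Γ₀
end
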